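/- arXiv:2011.04366 — 3 statements merged into one kernel-verified Lean document; each statement's English description precedes it below -/
import Mathlib

section
/- Let A, M be real symmetric matrices with M positive definite, Ax = λMx, xᵀMx = 1, and let A', M' be symmetric. If for every eigenvector y with Ay = λMy and yᵀMx = 0 one has yᵀ(A' - λM')x = 0, then there exists x'⊥ ∈ ℝⁿ with (A - λM)x'⊥ = -(I - Mxxᵀ)(A' - λM')x and yᵀM x'⊥ = 0 for all such y and xᵀMx'⊥ = 0. -/
/-!
With `S = A - λM` symmetric, `S z = b` is solvable exactly when `b` is dot-orthogonal to
`ker S` (Fredholm alternative). The deflated right-hand side `b = -(I - Mxxᵀ)(A' - λM')x` is: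
for `y ∈ ker S`, the vector `y - (yᵀMx)x` lies in `ker S` and is `M`-orthogonal to `x`, so the
compatibility hypothesis applies to it. Any solution `z` can then be corrected by its
component in `ker S` along the `M`-orthogonal decomposition `ℝⁿ = ker S ⊕ (ker S)^{⊥_M}`,
which exists because `M` is positive definite.
-/

open Matrix

section

variable {n : Type*} [Fintype n]

theorem Matrix.exists_mulVec_eq_of_forall_vecMul_eq_zero {K m : Type*} [Field K] [Fintype m]
    (S : Matrix m n K) {b : m → K} (hb : ∀ y, y ᵥ* S = 0 → y ⬝ᵥ b = 0) :
    ∃ z, S *ᵥ z = b := by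
  classical
  by_contra! hz
  have hb_range : b ∉ LinearMap.range S.mulVecLin := by
    rintro ⟨z, rfl⟩
    exact hz z rfl
  obtain ⟨f, hfb, hf⟩ := Submodule.exists_dual_map_eq_bot_of_notMem hb_range inferInstance
  set y := (dotProductEquiv K m).symm f
  have hf_eq : ∀ v, f v = y ⬝ᵥ v := fun v => by
    rw [← dotProductEquiv_apply_apply, LinearEquiv.apply_symm_apply]
  refine hfb ((hf_eq b).trans (hb y ?_))
  ext j
  have hj : f (S *ᵥ Pi.single j 1) = 0 := by
    rw [← Submodule.mem_bot K, ← hf]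
    exact Submodule.mem_map_of_mem (LinearMap.mem_range_self _ _)
  rwa [hf_eq, dotProduct_mulVec, dotProduct_single, mul_one] at hj

theorem Matrix.PosDef.isCompl_orthogonal_toBilin' {𝕜 : Type*} [Field 𝕜] [PartialOrder 𝕜]
    [StarRing 𝕜] [TrivialStar 𝕜] [DecidableEq n] {M : Matrix n n 𝕜} (hM : M.PosDef)
    (W : Submodule 𝕜 (n → 𝕜)) :
    IsCompl W ((toBilin' M).orthogonal W) := by
  have hrefl : (toBilin' M).IsRefl :=
    (isSymm_toBilin'_iff_isSymm.2 (isHermitian_iff_isSymm.1 hM.isHermitian)).isRefl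
  refine LinearMap.BilinForm.isCompl_orthogonal_of_restrict_nondegenerate hrefl
    (LinearMap.BilinForm.nondegenerate_restrict_of_disjoint_orthogonal _ hrefl ?_)
  refine Submodule.disjoint_def.2 fun w hw hw_orth => ?_
  by_contra hne
  have hpos := hM.dotProduct_mulVec_pos hne
  rw [star_trivial, ← toBilin'_apply', hw_orth w hw] at hpos
  exact lt_irrefl _ hpos

theorem Matrix.one_sub_mul_vecMulVec_mulVec {R : Type*} [CommRing R] [DecidableEq n]
    (M : Matrix n n R) (x c : n → R) :
    (1 - M * vecMulVec x x) *ᵥ c = c - (x ⬝ᵥ c) • (M *ᵥ x) := by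
  rw [sub_mulVec, one_mulVec, ← mulVec_mulVec, vecMulVec_mulVec, op_smul_eq_smul, mulVec_smul]

theorem dotProduct_sub_smul_mulVec_eq_zero {R : Type*} [CommRing R] (M : Matrix n n R)
    {W : Submodule R (n → R)} {x c : n → R} (hx : x ∈ W) (hnorm : x ⬝ᵥ (M *ᵥ x) = 1)
    (hc : ∀ y ∈ W, y ⬝ᵥ (M *ᵥ x) = 0 → y ⬝ᵥ c = 0) {y : n → R} (hy : y ∈ W) :
    y ⬝ᵥ (c - (x ⬝ᵥ c) • (M *ᵥ x)) = 0 := by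
  set μ := y ⬝ᵥ (M *ᵥ x)
  have hy' : (y - μ • x) ⬝ᵥ c = 0 :=
    hc _ (W.sub_mem hy (W.smul_mem μ hx)) (by simp [sub_dotProduct, hnorm, μ])
  simp only [sub_dotProduct, smul_dotProduct, smul_eq_mul, sub_eq_zero] at hy'
  rw [dotProduct_sub, dotProduct_smul, hy', smul_eq_mul]
  ring

end

theorem degenerate_perp_component_exists_general
    {n : ℕ} (A M A' M' : Matrix (Fin n) (Fin n) ℝ)
    (hA : A.IsSymm) (hM : M.IsSymm) (hMpd : M.PosDef)
    (x : Fin n → ℝ) (lam : ℝ)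
    (heig : A *ᵥ x = lam • (M *ᵥ x))
    (hnorm : x ⬝ᵥ (M *ᵥ x) = 1)
    (hcompat : ∀ y : Fin n → ℝ, A *ᵥ y = lam • (M *ᵥ y) →
      y ⬝ᵥ (M *ᵥ x) = 0 → y ⬝ᵥ ((A' - lam • M') *ᵥ x) = 0) :
    ∃ xp : Fin n → ℝ,
      (A - lam • M) *ᵥ xp = -((1 - M * vecMulVec x x) *ᵥ ((A' - lam • M') *ᵥ x)) ∧
      (∀ y : Fin n → ℝ, A *ᵥ y = lam • (M *ᵥ y) →
        y ⬝ᵥ (M *ᵥ x) = 0 → y ⬝ᵥ (M *ᵥ xp) = 0) ∧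
      x ⬝ᵥ (M *ᵥ xp) = 0 := by
  set S := A - lam • M
  have hS : S.IsSymm := hA.sub (hM.smul lam)
  set W := LinearMap.ker S.mulVecLin
  have mem_W : ∀ y, y ∈ W ↔ A *ᵥ y = lam • (M *ᵥ y) := fun y => by
    rw [LinearMap.mem_ker, mulVecLin_apply, sub_mulVec, smul_mulVec, sub_eq_zero]
  obtain ⟨z, hz⟩ := S.exists_mulVec_eq_of_forall_vecMul_eq_zero
    (b := -((1 - M * vecMulVec x x) *ᵥ ((A' - lam • M') *ᵥ x))) fun y hy => by
      have hyW : y ∈ W := by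
        rwa [LinearMap.mem_ker, mulVecLin_apply, ← vecMul_transpose, hS.eq]
      rw [dotProduct_neg, one_sub_mul_vecMulVec_mulVec, neg_eq_zero]
      exact dotProduct_sub_smul_mulVec_eq_zero M ((mem_W x).2 heig) hnorm
        (fun y hy => hcompat y ((mem_W y).1 hy)) hyW
  obtain ⟨w, hw, r, hr, rfl⟩ : ∃ w ∈ W, ∃ r ∈ (toBilin' M).orthogonal W, w + r = z :=
    Submodule.mem_sup.1 ((hMpd.isCompl_orthogonal_toBilin' W).sup_eq_top ▸ Submodule.mem_top)
  have hr_orth : ∀ y ∈ W, y ⬝ᵥ (M *ᵥ r) = 0 := fun y hy => by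
    rw [← toBilin'_apply']
    exact LinearMap.BilinForm.mem_orthogonal_iff.1 hr y hy
  refine ⟨r, ?_, fun y hy _ => hr_orth y ((mem_W y).2 hy), hr_orth x ((mem_W x).2 heig)⟩
  rwa [mulVec_add, show S *ᵥ w = 0 from hw, zero_add] at hz

theorem degenerate_perp_component_exists
    {n : ℕ} (A M A' M' : Matrix (Fin n) (Fin n) ℝ)
    (hA : A.IsSymm) (hM : M.IsSymm) (hMpd : M.PosDef)
    (hA' : A'.IsSymm) (hM' : M'.IsSymm)
    (x : Fin n → ℝ) (lam : ℝ)
    (heig : A *ᵥ x = lam • (M *ᵥ x))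
    (hnorm : x ⬝ᵥ (M *ᵥ x) = 1)
    (hcompat : ∀ y : Fin n → ℝ, A *ᵥ y = lam • (M *ᵥ y) →
      y ⬝ᵥ (M *ᵥ x) = 0 → y ⬝ᵥ ((A' - lam • M') *ᵥ x) = 0) :
    ∃ xp : Fin n → ℝ,
      (A - lam • M) *ᵥ xp = -((1 - M * vecMulVec x x) *ᵥ ((A' - lam • M') *ᵥ x)) ∧
      (∀ y : Fin n → ℝ, A *ᵥ y = lam • (M *ᵥ y) →
        y ⬝ᵥ (M *ᵥ x) = 0 → y ⬝ᵥ (M *ᵥ xp) = 0) ∧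
      x ⬝ᵥ (M *ᵥ xp) = 0 :=
  degenerate_perp_component_exists_general A M A' M' hA hM hMpd x lam heig hnorm hcompat
end

section
/- Let x, x̄ ∈ ℝⁿ and λ̄ ∈ ℝ, with A, M symmetric, M positive definite, Ax = λMx, xᵀMx = 1, and λ a simple eigenvalue. Define Ā = xxᵀλ̄ - (I - xxᵀM)(A - λM)⁺(I - Mxxᵀ)x̄xᵀ. Then for any symmetric perturbation A', tr(Āᵀ A') = λ̄·λ' + x̄ᵀx', where λ' = xᵀA'x and x' = -(I - xxᵀM)(A - λM)⁺(I - Mxxᵀ)A'x are the first-order perturbations of λ and x when only A is perturbed (M' = 0). -/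
open Matrix

/-- `P` satisfies the four Moore–Penrose conditions for `B`. -/
def IsMoorePenrose {n : ℕ} (B P : Matrix (Fin n) (Fin n) ℝ) : Prop :=
  B * P * B = B ∧ P * B * P = P ∧ (B * P)ᵀ = B * P ∧ (P * B)ᵀ = P * B

lemma mp_unique {n : ℕ} (B P Q : Matrix (Fin n) (Fin n) ℝ)
    (hP : IsMoorePenrose B P) (hQ : IsMoorePenrose B Q) : P = Q := by
  obtain ⟨hP1, hP2, hP3, hP4⟩ := hP
  obtain ⟨hQ1, hQ2, hQ3, hQ4⟩ := hQ
  have hBP : B * P = B * Q := by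
    have h5 : B * P * (B * Q) = B * Q := by
      calc B * P * (B * Q) = (B * P * B) * Q := by simp only [Matrix.mul_assoc]
        _ = B * Q := by rw [hP1]
    have h6 : B * P * (B * Q) = B * P := by
      calc B * P * (B * Q) = (B * P)ᵀ * (B * Q)ᵀ := by rw [hP3, hQ3]
        _ = Pᵀ * (B * Q * B)ᵀ := by simp only [transpose_mul, Matrix.mul_assoc]
        _ = Pᵀ * Bᵀ := by rw [hQ1]
        _ = (B * P)ᵀ := (transpose_mul _ _).symm
        _ = B * P := hP3
    exact h6.symm.trans h5
  have hPB : P * B = Q * B := by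
    have h5 : Q * B * (P * B) = Q * B := by
      calc Q * B * (P * B) = Q * (B * P * B) := by simp only [Matrix.mul_assoc]
        _ = Q * B := by rw [hP1]
    have h6 : Q * B * (P * B) = P * B := by
      calc Q * B * (P * B) = (Q * B)ᵀ * (P * B)ᵀ := by rw [hQ4, hP4]
        _ = (B * Q * B)ᵀ * Pᵀ := by simp only [transpose_mul, Matrix.mul_assoc]
        _ = Bᵀ * Pᵀ := by rw [hQ1]
        _ = (P * B)ᵀ := (transpose_mul _ _).symm
        _ = P * B := hP4
    exact h6.symm.trans (h5.trans rfl) ▸ (h6.symm.trans h5).symm ▸ rfl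
  calc P = P * B * P := hP2.symm
    _ = Q * B * P := by rw [hPB]
    _ = Q * (B * P) := Matrix.mul_assoc _ _ _
    _ = Q * (B * Q) := by rw [hBP]
    _ = Q * B * Q := (Matrix.mul_assoc _ _ _).symm
    _ = Q := hQ2

lemma pinv_symm {n : ℕ} (B P : Matrix (Fin n) (Fin n) ℝ) (hB : Bᵀ = B)
    (hP : IsMoorePenrose B P) : Pᵀ = P := by
  obtain ⟨h1, h2, h3, h4⟩ := hP
  have hQ : IsMoorePenrose B Pᵀ := by
    refine ⟨?_, ?_, ?_, ?_⟩
    · calc B * Pᵀ * B = (Bᵀ * P * Bᵀ)ᵀ := by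
            simp only [transpose_mul, transpose_transpose, Matrix.mul_assoc]
        _ = (B * P * B)ᵀ := by rw [hB]
        _ = B := by rw [h1, hB]
    · calc Pᵀ * B * Pᵀ = Pᵀ * Bᵀ * Pᵀ := by rw [hB]
        _ = (P * B * P)ᵀ := by
            simp only [transpose_mul, transpose_transpose, Matrix.mul_assoc]
        _ = Pᵀ := by rw [h2]
    · calc (B * Pᵀ)ᵀ = P * Bᵀ := by rw [transpose_mul, transpose_transpose]
        _ = P * B := by rw [hB]
        _ = (P * B)ᵀ := h4.symm
        _ = Bᵀ * Pᵀ := transpose_mul _ _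
        _ = B * Pᵀ := by rw [hB]
    · calc (Pᵀ * B)ᵀ = Bᵀ * P := by rw [transpose_mul, transpose_transpose]
        _ = B * P := by rw [hB]
        _ = (B * P)ᵀ := h3.symm
        _ = Pᵀ * Bᵀ := transpose_mul _ _
        _ = Pᵀ * B := by rw [hB]
  exact mp_unique B Pᵀ P hQ ⟨h1, h2, h3, h4⟩

lemma trace_vecMulVec_mul {n : ℕ} (a b : Fin n → ℝ) (C : Matrix (Fin n) (Fin n) ℝ) :
    (vecMulVec a b * C).trace = b ⬝ᵥ (C *ᵥ a) := by
  simp only [Matrix.trace, Matrix.diag, Matrix.mul_apply, vecMulVec_apply,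
    dotProduct, Matrix.mulVec, Finset.mul_sum]
  rw [Finset.sum_comm]
  congr 1; ext j; congr 1; ext i; ring

theorem backward_derivative_single_eigpair
    {n : ℕ} (A M : Matrix (Fin n) (Fin n) ℝ)
    (hA : A.IsSymm) (hM : M.IsSymm) (hMpd : M.PosDef)
    (x xbar : Fin n → ℝ) (lam lambar : ℝ)
    (heig : A *ᵥ x = lam • (M *ᵥ x))
    (hnorm : x ⬝ᵥ (M *ᵥ x) = 1)
    (hsimple : ∀ y : Fin n → ℝ, (A - lam • M) *ᵥ y = 0 → ∃ c : ℝ, y = c • x)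
    (P : Matrix (Fin n) (Fin n) ℝ)
    (hP : IsMoorePenrose (A - lam • M) P) :
    ∀ A' : Matrix (Fin n) (Fin n) ℝ, A'.IsSymm →
      ((lambar • vecMulVec x x -
        (1 - vecMulVec x x * M) * P * (1 - M * vecMulVec x x) * vecMulVec xbar x)ᵀ
        * A').trace =
      lambar * (x ⬝ᵥ (A' *ᵥ x)) +
        xbar ⬝ᵥ (-((1 - vecMulVec x x * M) *ᵥ
          (P *ᵥ ((1 - M * vecMulVec x x) *ᵥ (A' *ᵥ x))))) := by
  intro A' hA'
  have hBsym : (A - lam • M)ᵀ = A - lam • M := by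
    rw [transpose_sub, transpose_smul, hA.eq, hM.eq]
  have hPt : Pᵀ = P := pinv_symm _ _ hBsym hP
  have hEt : (vecMulVec x x)ᵀ = vecMulVec x x := by
    ext i j; simp [vecMulVec_apply, transpose_apply, mul_comm]
  have hXt : (vecMulVec xbar x)ᵀ = vecMulVec x xbar := by
    ext i j; simp [vecMulVec_apply, transpose_apply, mul_comm]
  have hKt : ((1 - vecMulVec x x * M) * P * (1 - M * vecMulVec x x))ᵀ
      = (1 - vecMulVec x x * M) * P * (1 - M * vecMulVec x x) := by
    simp only [transpose_mul, transpose_sub, transpose_one, hEt, hM.eq, hPt,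
      Matrix.mul_assoc]
  rw [transpose_sub, transpose_smul, hEt, transpose_mul, hKt, hXt,
    Matrix.sub_mul, Matrix.trace_sub, Matrix.smul_mul, Matrix.trace_smul,
    trace_vecMulVec_mul, Matrix.mul_assoc, trace_vecMulVec_mul]
  simp only [Matrix.mulVec_mulVec, dotProduct_neg, smul_eq_mul, Matrix.mul_assoc]
  ring
end

section
/- Let A, M be symmetric with M positive definite, AX = MXΛ and XᵀMX = I_k, and let V' = A'X - M'XΛ. Then the right-hand side of the Sylvester equation, RHS := V' - MX[I∘(XᵀV')], satisfies Xᵀ(RHS)_j = 0 in each column j restricted to indices i with λᵢ = λⱼ, provided (D - I)∘(XᵀV') = 0; i.e., the Sylvester equation AY' - MY'Λ = RHS is solvable column by column. -/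
/-!
Since `XᵀMX = I`, the matrix `Xᵀ · RHS` equals `XᵀV' - I ∘ (XᵀV')`, whose entries on the
degenerate block `λᵢ = λⱼ` vanish by the compatibility condition `(D - I) ∘ (XᵀV') = 0`.
The kernel of the symmetric matrix `A - λⱼM` lies in the span of the columns of `X` with
eigenvalue `λⱼ`, so the `j`-th column of `RHS` is orthogonal to it and hence lies in its range.
-/

open Matrix

namespace Matrix

variable {m n R : Type*}

theorem IsHermitian.exists_mulVec_eq {𝕜 : Type*} [RCLike 𝕜] [Fintype n] [DecidableEq n]
    {B : Matrix n n 𝕜} (hB : B.IsHermitian) {b : n → 𝕜}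
    (hb : ∀ y, B *ᵥ y = 0 → star y ⬝ᵥ b = 0) : ∃ y, B *ᵥ y = b := by
  have hrange : LinearMap.range B.toEuclideanLin = (LinearMap.ker B.toEuclideanLin)ᗮ := by
    rw [← (isSymmetric_toEuclideanLin_iff.mpr hB).orthogonal_range,
      Submodule.orthogonal_orthogonal]
  obtain ⟨y, hy⟩ : WithLp.toLp 2 b ∈ LinearMap.range B.toEuclideanLin := by
    rw [hrange, Submodule.mem_orthogonal]
    intro y hy
    rw [EuclideanSpace.inner_eq_star_dotProduct, dotProduct_comm]
    exact hb y.ofLp (by simpa using congrArg WithLp.ofLp hy)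
  exact ⟨y.ofLp, by simpa using congrArg WithLp.ofLp hy⟩

theorem mulVec_dotProduct_eq_zero [CommSemiring R] [Fintype m] [Fintype n] {X : Matrix m n R}
    {c : n → R} {b : m → R} (h : ∀ l, c l = 0 ∨ (Xᵀ *ᵥ b) l = 0) :
    (X *ᵥ c) ⬝ᵥ b = 0 := by
  rw [dotProduct_comm, dotProduct_mulVec, ← mulVec_transpose]
  exact Finset.sum_eq_zero fun l _ => by rcases h l with h | h <;> simp [h]

theorem mul_sub_mul_mul_eq_of_mul_mul_eq_one [CommRing R] [Fintype m] [Fintype n]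
    [DecidableEq n] {l : Type*} [Fintype l] {Y : Matrix n m R} {M : Matrix m l R} {X : Matrix l n R}
    (h : Y * M * X = 1) (V : Matrix m n R) (G : Matrix n n R) :
    Y * (V - M * X * G) = Y * V - G := by
  rw [Matrix.mul_sub, ← Matrix.mul_assoc, ← Matrix.mul_assoc, h, Matrix.one_mul]

theorem sub_hadamard_one_apply_eq_zero [Ring R] [DecidableEq n] {D W : Matrix n n R}
    (h : hadamard (D - 1) W = 0) {i j : n} (hD : D i j = 1) :
    (W - hadamard 1 W) i j = 0 := by
  simpa [hD, sub_mul] using congrFun (congrFun h i) j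

end Matrix

theorem sylvester_rhs_solvable_general
    {n k : ℕ} (A M : Matrix (Fin n) (Fin n) ℝ)
    (hA : A.IsSymm) (hM : M.IsSymm)
    (X : Matrix (Fin n) (Fin k) ℝ) (lam : Fin k → ℝ)
    (hnorm : Xᵀ * M * X = 1)
    (V' : Matrix (Fin n) (Fin k) ℝ)
    (D : Matrix (Fin k) (Fin k) ℝ)
    (hD : ∀ i j, D i j = if lam i = lam j then 1 else 0)
    (hcompat : Matrix.hadamard (D - 1) (Xᵀ * V') = 0)
    (hspan : ∀ (j : Fin k) (y : Fin n → ℝ), (A - lam j • M) *ᵥ y = 0 →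
      ∃ c : Fin k → ℝ, (∀ i, lam i ≠ lam j → c i = 0) ∧ y = X *ᵥ c) :
    (∀ i j : Fin k, lam i = lam j →
      (Xᵀ * (V' - M * X * Matrix.hadamard 1 (Xᵀ * V'))) i j = 0) ∧
    (∀ j : Fin k, ∃ y : Fin n → ℝ,
      (A - lam j • M) *ᵥ y = fun i => (V' - M * X * Matrix.hadamard 1 (Xᵀ * V')) i j) := by
  set rhs := V' - M * X * hadamard 1 (Xᵀ * V')
  have hblock : ∀ i j, lam i = lam j → (Xᵀ * rhs) i j = 0 := fun i j hij => by
    rw [mul_sub_mul_mul_eq_of_mul_mul_eq_one hnorm]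
    exact sub_hadamard_one_apply_eq_zero hcompat (by simp [hD, hij])
  refine ⟨hblock, fun j => ?_⟩
  have hsymm : (A - lam j • M).IsHermitian := isHermitian_iff_isSymm.mpr (hA.sub (hM.smul _))
  refine hsymm.exists_mulVec_eq fun y hy => ?_
  obtain ⟨c, hc, rfl⟩ := hspan j y hy
  rw [star_trivial]
  refine mulVec_dotProduct_eq_zero fun l => ?_
  by_cases hl : lam l = lam j
  · exact Or.inr (hblock l j hl)
  · exact Or.inl (hc l hl)

theorem sylvester_rhs_solvable
    {n k : ℕ} (A M A' M' : Matrix (Fin n) (Fin n) ℝ)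
    (hA : A.IsSymm) (hM : M.IsSymm) (hMpd : M.PosDef)
    (hA' : A'.IsSymm) (hM' : M'.IsSymm)
    (X : Matrix (Fin n) (Fin k) ℝ) (lam : Fin k → ℝ)
    (heig : A * X = M * X * diagonal lam)
    (hnorm : Xᵀ * M * X = 1)
    (V' : Matrix (Fin n) (Fin k) ℝ)
    (hV' : V' = A' * X - M' * X * diagonal lam)
    (D : Matrix (Fin k) (Fin k) ℝ)
    (hD : ∀ i j, D i j = if lam i = lam j then 1 else 0)
    (hcompat : Matrix.hadamard (D - 1) (Xᵀ * V') = 0)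
    (hspan : ∀ (j : Fin k) (y : Fin n → ℝ), (A - lam j • M) *ᵥ y = 0 →
      ∃ c : Fin k → ℝ, (∀ i, lam i ≠ lam j → c i = 0) ∧ y = X *ᵥ c) :
    (∀ i j : Fin k, lam i = lam j →
      (Xᵀ * (V' - M * X * Matrix.hadamard 1 (Xᵀ * V'))) i j = 0) ∧
    (∀ j : Fin k, ∃ y : Fin n → ℝ,
      (A - lam j • M) *ᵥ y = fun i => (V' - M * X * Matrix.hadamard 1 (Xᵀ * V')) i j) :=
  sylvester_rhs_solvable_general A M hA hM X lam hnorm V' D hD hcompat hspan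
end
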